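/- arXiv:1503.05293 — 7 statements merged into one kernel-verified Lean document; each statement's English description precedes it below -/
import Mathlib

section
/- Let H be a real Hilbert space, J : H → ℝ a convex, absolutely one-homogeneous functional, and f ∈ H an eigenfunction, i.e. λ • f ∈ ∂J(f) for some λ > 0. Define u : ℝ → H by u(t) = max(1 - λ*t, 0) • f and p : ℝ → H by p(t) = λ • f for t < 1/λ and p(t) = 0 for t ≥ 1/λ. Then u(0) = f, for every t ≥ 0 one has p(t) ∈ ∂J(u(t)), and for every t > 0 with t ≠ 1/λ the function u is differentiable at t with derivative u'(t) = -p(t). In other words, u solves the gradient flow ∂ₜu = -p, p ∈ ∂J(u), u(0) = f. -/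
/-!
For an absolutely one-homogeneous `J`, a vector `p` is a subgradient at `u` exactly when
`⟪p, u⟫ = J u` and `⟪p, v⟫ ≤ J v` for all `v`. The second condition does not involve `u` and the
first is preserved by scaling `u` with `c ≥ 0`, so `λ • f ∈ ∂J(c • f)` for all `c ≥ 0`; it also
forces `J ≥ 0`, i.e. `0 ∈ ∂J(0)`. Hence `λ • f` stays a subgradient along `u(t) = (1 - λt) • f`
while `u` moves with velocity `-λ • f`, and after the extinction time `1/λ` both `u` and `p`
vanish.
-/

open RealInnerProductSpace

section Subgradient

variable {H : Type*} [NormedAddCommGroup H] [InnerProductSpace ℝ H]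

def HasSubgradientAt (J : H → ℝ) (p u : H) : Prop :=
  ∀ v : H, J u + ⟪p, v - u⟫ ≤ J v

variable {J : H → ℝ} (hJ : ∀ (c : ℝ) (u : H), J (c • u) = |c| * J u)
include hJ

theorem map_zero_of_abs_homogeneous : J 0 = 0 := by
  simpa using hJ 0 0

theorem map_neg_of_abs_homogeneous (v : H) : J (-v) = J v := by
  simpa using hJ (-1) v

theorem hasSubgradientAt_iff_of_abs_homogeneous {p u : H} :
    HasSubgradientAt J p u ↔ ⟪p, u⟫ = J u ∧ ∀ v, ⟪p, v⟫ ≤ J v := by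
  constructor
  · intro h
    have at_zero := h 0
    have at_two := h ((2 : ℝ) • u)
    rw [map_zero_of_abs_homogeneous hJ, zero_sub, inner_neg_right] at at_zero
    rw [hJ, show (2 : ℝ) • u - u = u by rw [two_smul]; abel] at at_two
    norm_num at at_two
    have hpu : ⟪p, u⟫ = J u := by linarith
    refine ⟨hpu, fun v => ?_⟩
    have := h v
    rw [inner_sub_right] at this
    linarith
  · rintro ⟨hpu, hle⟩ v
    rw [inner_sub_right, hpu]
    linarith [hle v]

theorem HasSubgradientAt.smul_of_nonneg {p u : H} (h : HasSubgradientAt J p u) {c : ℝ}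
    (hc : 0 ≤ c) : HasSubgradientAt J p (c • u) := by
  rw [hasSubgradientAt_iff_of_abs_homogeneous hJ] at h ⊢
  refine ⟨?_, h.2⟩
  rw [real_inner_smul_right, hJ, abs_of_nonneg hc, h.1]

theorem HasSubgradientAt.nonneg {p u : H} (h : HasSubgradientAt J p u) (v : H) : 0 ≤ J v := by
  have hle := ((hasSubgradientAt_iff_of_abs_homogeneous hJ).1 h).2
  have := hle (-v)
  rw [inner_neg_right, map_neg_of_abs_homogeneous hJ] at this
  linarith [hle v]

theorem hasSubgradientAt_zero_zero_of_hasSubgradientAt {p u : H} (h : HasSubgradientAt J p u) :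
    HasSubgradientAt J 0 0 := by
  intro v
  simpa [map_zero_of_abs_homogeneous hJ] using h.nonneg hJ v

end Subgradient

section PositivePart

variable {g : ℝ → ℝ} {g' t : ℝ}

theorem HasDerivAt.max_zero_of_pos (hg : HasDerivAt g g' t) (ht : 0 < g t) :
    HasDerivAt (fun s => max (g s) 0) g' t :=
  hg.congr_of_eventuallyEq <| (continuousAt_const.eventually_lt hg.continuousAt ht).mono
    fun _ hs => max_eq_left hs.le

theorem HasDerivAt.max_zero_of_neg (hg : HasDerivAt g g' t) (ht : g t < 0) :
    HasDerivAt (fun s => max (g s) 0) 0 t :=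
  (hasDerivAt_const t 0).congr_of_eventuallyEq <|
    (hg.continuousAt.eventually_lt continuousAt_const ht).mono fun _ hs => max_eq_right hs.le

end PositivePart

theorem spectral_stmt4_general {H : Type*} [NormedAddCommGroup H] [InnerProductSpace ℝ H]
    (J : H → ℝ)
    (hJhom : ∀ (c : ℝ) (u : H), J (c • u) = |c| * J u)
    (f : H) (lam : ℝ) (hlam : 0 < lam)
    (heig : ∀ v : H, J f + ⟪lam • f, v - f⟫ ≤ J v)
    (u p : ℝ → H)
    (hu : ∀ t : ℝ, u t = max (1 - lam * t) 0 • f)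
    (hp : ∀ t : ℝ, p t = if t < 1 / lam then lam • f else 0) :
    u 0 = f ∧
    (∀ t : ℝ, 0 ≤ t → ∀ v : H, J (u t) + ⟪p t, v - u t⟫ ≤ J v) ∧
    (∀ t : ℝ, 0 < t → t ≠ 1 / lam → HasDerivAt u (-(p t)) t) := by
  have hf : HasSubgradientAt J (lam • f) f := heig
  have pos_iff (t : ℝ) : 0 < 1 - lam * t ↔ t < 1 / lam := by
    rw [sub_pos, lt_div_iff₀ hlam, mul_comm]
  have hderiv (t : ℝ) : HasDerivAt (fun s => 1 - lam * s) (-lam) t := by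
    simpa using ((hasDerivAt_id t).const_mul lam).const_sub 1
  refine ⟨by simp [hu], fun t _ => ?_, fun t _ hne => ?_⟩
  · change HasSubgradientAt J (p t) (u t)
    rw [hu, hp]
    split_ifs with ht
    · exact hf.smul_of_nonneg hJhom (le_max_right _ _)
    · rw [max_eq_right (not_lt.1 ((pos_iff t).not.2 ht)), zero_smul]
      exact hasSubgradientAt_zero_zero_of_hasSubgradientAt hJhom hf
  · rw [funext hu, hp]
    split_ifs with ht
    · simpa using ((hderiv t).max_zero_of_pos ((pos_iff t).2 ht)).smul_const f
    · have hneg : 1 - lam * t < 0 := by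
        rw [sub_neg, ← div_lt_iff₀' hlam]
        exact lt_of_le_of_ne (not_lt.1 ht) (Ne.symm hne)
      simpa using ((hderiv t).max_zero_of_neg hneg).smul_const f

/-- For an eigenfunction `f` of `J` (i.e. `λ • f ∈ ∂J(f)`, `λ > 0`), the function
`u(t) = max(1 - λt, 0) • f` together with `p(t) = λ • f` for `t < 1/λ`, `p(t) = 0` for
`t ≥ 1/λ`, solves the gradient flow `∂ₜu = -p`, `p ∈ ∂J(u)`, `u(0) = f`. -/
theorem spectral_stmt4 {H : Type*} [NormedAddCommGroup H] [InnerProductSpace ℝ H]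
    [CompleteSpace H] (J : H → ℝ) (hJconv : ConvexOn ℝ Set.univ J)
    (hJhom : ∀ (c : ℝ) (u : H), J (c • u) = |c| * J u)
    (f : H) (lam : ℝ) (hlam : 0 < lam)
    (heig : ∀ v : H, J f + ⟪lam • f, v - f⟫ ≤ J v)
    (u p : ℝ → H)
    (hu : ∀ t : ℝ, u t = max (1 - lam * t) 0 • f)
    (hp : ∀ t : ℝ, p t = if t < 1 / lam then lam • f else 0) :
    u 0 = f ∧
    (∀ t : ℝ, 0 ≤ t → ∀ v : H, J (u t) + ⟪p t, v - u t⟫ ≤ J v) ∧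
    (∀ t : ℝ, 0 < t → t ≠ 1 / lam → HasDerivAt u (-(p t)) t) :=
  spectral_stmt4_general J hJhom f lam hlam heig u p hu hp
end

section
/- Let H be a real Hilbert space, f ∈ H, and u : (0, ∞) → H twice differentiable with u(t) → f as t → 0⁺, u(t) → 0 and t • u'(t) → 0 as t → ∞, and t • u'(t) → 0 as t → 0⁺. If the function t ↦ t • u''(t) is Bochner integrable on (0, ∞), then ∫₀^∞ t • u''(t) dt = f. (Reconstruction of the signal from the wavelength spectral representation φ(t) = t ∂ₜₜ u(t).) -/
open MeasureTheory Filter Set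

/-
Since `d/dt (t • u'(t) - u(t)) = t • u''(t)`, the integral of `t • u''(t)` over `(0, ∞)` is the
difference of the limits of `t • u'(t) - u(t)` at `∞` and at `0⁺`, namely `0 - (0 - f) = f`.
-/

theorem integral_Ioi_of_hasDerivAt_of_tendsto_nhdsGT {E : Type*} [NormedAddCommGroup E]
    [NormedSpace ℝ E] [CompleteSpace E] {g g' : ℝ → E} {a : ℝ} {l m : E}
    (hderiv : ∀ x ∈ Ioi a, HasDerivAt g (g' x) x) (hg'int : IntegrableOn g' (Ioi a))
    (hleft : Tendsto g (nhdsWithin a (Ioi a)) (nhds l)) (hright : Tendsto g atTop (nhds m)) :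
    ∫ x in Ioi a, g' x = m - l := by
  classical
  have hcont : ContinuousWithinAt (Function.update g a l) (Ici a) a := by
    rwa [continuousWithinAt_update_same, Ici_sdiff_left]
  have hderiv' : ∀ x ∈ Ioi a, HasDerivAt (Function.update g a l) (g' x) x := fun x hx =>
    (hderiv x hx).congr_of_eventuallyEq <| by
      filter_upwards [eventually_ne_nhds (ne_of_gt hx)] with y hy using Function.update_of_ne hy _ _
  have hright' : Tendsto (Function.update g a l) atTop (nhds m) :=
    hright.congr' <| by
      filter_upwards [eventually_gt_atTop a] with y hy using (Function.update_of_ne hy.ne' _ _).symm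
  simpa using integral_Ioi_of_hasDerivAt_of_tendsto hcont hderiv' hg'int hright'

theorem hasDerivAt_smul_deriv_sub {E : Type*} [NormedAddCommGroup E] [NormedSpace ℝ E]
    {u u' : ℝ → E} {u'' : E} {t : ℝ} (hu' : HasDerivAt u (u' t) t) (hu'' : HasDerivAt u' u'' t) :
    HasDerivAt (fun s => s • u' s - u s) (t • u'') t :=
  (((hasDerivAt_id t).smul hu'').sub hu').congr_deriv (by simp)

/-- Reconstruction of the signal from the wavelength spectral representation
`φ(t) = t • u''(t)`: under suitable decay assumptions, `∫₀^∞ t • u''(t) dt = f`. -/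
theorem spectral_stmt7 {H : Type*} [NormedAddCommGroup H] [InnerProductSpace ℝ H]
    [CompleteSpace H] (f : H) (u u' u'' : ℝ → H)
    (hu' : ∀ t : ℝ, 0 < t → HasDerivAt u (u' t) t)
    (hu'' : ∀ t : ℝ, 0 < t → HasDerivAt u' (u'' t) t)
    (hu0 : Tendsto u (nhdsWithin 0 (Set.Ioi 0)) (nhds f))
    (huinf : Tendsto u atTop (nhds 0))
    (hderinf : Tendsto (fun t : ℝ => t • u' t) atTop (nhds (0 : H)))
    (hder0 : Tendsto (fun t : ℝ => t • u' t) (nhdsWithin 0 (Set.Ioi 0)) (nhds (0 : H)))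
    (hint : IntegrableOn (fun t : ℝ => t • u'' t) (Set.Ioi 0)) :
    ∫ t in Set.Ioi 0, t • u'' t = f := by
  have hderiv : ∀ t ∈ Ioi (0 : ℝ), HasDerivAt (fun s => s • u' s - u s) (t • u'' t) t :=
    fun t ht => hasDerivAt_smul_deriv_sub (hu' t ht) (hu'' t ht)
  simpa using integral_Ioi_of_hasDerivAt_of_tendsto_nhdsGT hderiv hint
    (hder0.sub hu0) (hderinf.sub huinf)
end

section
/- Let H be a real Hilbert space and J : H → ℝ convex. Suppose u : ℝ → H is differentiable at t₀, p₀ ∈ ∂J(u(t₀)), and the scalar function t ↦ J(u(t)) is differentiable at t₀. Then the derivative of t ↦ J(u(t)) at t₀ equals ⟪p₀, u'(t₀)⟫. In particular, if u solves a gradient flow, i.e. u'(t₀) = -p₀, then (d/dt) J(u(t))|_{t=t₀} = -‖p₀‖². -/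
open RealInnerProductSpace

/-- `t ↦ J (u t) - ℓ (u t)` is minimal at `t₀`, so its derivative `d - ℓ u'` vanishes there. -/
theorem HasDerivAt.eq_apply_of_subgradient {E : Type*} [NormedAddCommGroup E] [NormedSpace ℝ E]
    {J : E → ℝ} {ℓ : E →L[ℝ] ℝ} {u : ℝ → E} {u' : E} {t₀ d : ℝ}
    (hℓ : ∀ v, J (u t₀) + ℓ (v - u t₀) ≤ J v) (hu : HasDerivAt u u' t₀)
    (hd : HasDerivAt (fun t => J (u t)) d t₀) : d = ℓ u' := by
  have hmin : IsLocalMin (fun t => J (u t) - ℓ (u t)) t₀ := .of_forall fun t => by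
    have := hℓ (u t)
    rw [map_sub] at this
    show J (u t₀) - ℓ (u t₀) ≤ J (u t) - ℓ (u t)
    linarith
  have hderiv : HasDerivAt (fun t => J (u t) - ℓ (u t)) (d - ℓ u') t₀ :=
    hd.sub (ℓ.hasFDerivAt.comp_hasDerivAt t₀ hu)
  exact sub_eq_zero.mp (hmin.hasDerivAt_eq_zero hderiv)

theorem spectral_stmt8_general {H : Type*} [NormedAddCommGroup H] [InnerProductSpace ℝ H]
    (J : H → ℝ)
    (u : ℝ → H) (u' p₀ : H) (t₀ d : ℝ)
    (hu : HasDerivAt u u' t₀)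
    (hp : ∀ v : H, J (u t₀) + ⟪p₀, v - u t₀⟫ ≤ J v)
    (hd : HasDerivAt (fun t => J (u t)) d t₀) :
    d = ⟪p₀, u'⟫ ∧ (u' = -p₀ → d = -‖p₀‖ ^ 2) := by
  have hchain : d = ⟪p₀, u'⟫ := hu.eq_apply_of_subgradient (ℓ := innerSL ℝ p₀) hp hd
  refine ⟨hchain, fun hflow => ?_⟩
  rw [hchain, hflow, inner_neg_right, real_inner_self_eq_norm_sq]

/-- Chain rule along the flow: if `u` is differentiable at `t₀`, `p₀ ∈ ∂J(u(t₀))` and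
`t ↦ J(u(t))` is differentiable at `t₀`, then its derivative equals `⟪p₀, u'(t₀)⟫`.
In particular, for a gradient flow `u'(t₀) = -p₀` the derivative is `-‖p₀‖²`. -/
theorem spectral_stmt8 {H : Type*} [NormedAddCommGroup H] [InnerProductSpace ℝ H]
    [CompleteSpace H] (J : H → ℝ) (hJconv : ConvexOn ℝ Set.univ J)
    (u : ℝ → H) (u' p₀ : H) (t₀ d : ℝ)
    (hu : HasDerivAt u u' t₀)
    (hp : ∀ v : H, J (u t₀) + ⟪p₀, v - u t₀⟫ ≤ J v)
    (hd : HasDerivAt (fun t => J (u t)) d t₀) :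
    d = ⟪p₀, u'⟫ ∧ (u' = -p₀ → d = -‖p₀‖ ^ 2) :=
  spectral_stmt8_general J u u' p₀ t₀ d hu hp hd
end

section
/- Let H be a real Hilbert space and J : H → ℝ a convex, absolutely one-homogeneous functional. Let u, p : ℝ → H be differentiable at t₀ with u'(t₀) = -p(t₀) and p(t) ∈ ∂J(u(t)) for all t in a neighborhood of t₀, and assume the scalar function t ↦ J(u(t)) is differentiable at t₀. Then ⟪p'(t₀), u(t₀)⟫ = 0; equivalently, the wavelength spectral component φ(t₀) = -t₀ • p'(t₀) is orthogonal to u(t₀). -/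
/-!
Testing the subgradient inequality at `v = 0` and `v = 2 • u` shows that for a one-homogeneous
`J` every subgradient `p ∈ ∂J(u)` satisfies `⟪p, u⟫ = J u`. Along the flow this gives
`⟪p t, u t⟫ = J (u t)` near `t₀`, so both sides have derivative `d` at `t₀`. On the other hand
`t ↦ J (u t) - ⟪p t₀, u t⟫` has a minimum at `t₀`, whence `d = ⟪p t₀, u'(t₀)⟫ = -‖p t₀‖²`.
The product rule for the left side then leaves `⟪p', u t₀⟫ = 0`.
-/

open RealInnerProductSpace Filter

section Subgradient

variable {H : Type*} [NormedAddCommGroup H] [InnerProductSpace ℝ H]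

theorem inner_eq_of_subgradient_of_homogeneous {J : H → ℝ} {u p : H}
    (hJ : ∀ c : ℝ, 0 ≤ c → J (c • u) = c * J u)
    (hsub : ∀ v : H, J u + ⟪p, v - u⟫ ≤ J v) :
    ⟪p, u⟫ = J u := by
  have h₀ := hsub 0
  have h₂ := hsub ((2 : ℝ) • u)
  rw [zero_sub, inner_neg_right, ← zero_smul ℝ u, hJ 0 le_rfl] at h₀
  rw [hJ 2 zero_le_two, two_smul, add_sub_cancel_right] at h₂
  linarith

theorem HasDerivAt.eq_inner_of_subgradient {J : H → ℝ} {u : ℝ → H} {u' p : H} {t₀ d : ℝ}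
    (hu : HasDerivAt u u' t₀) (hd : HasDerivAt (fun t => J (u t)) d t₀)
    (hsub : ∀ v : H, J (u t₀) + ⟪p, v - u t₀⟫ ≤ J v) :
    d = ⟪p, u'⟫ := by
  have hmin : IsLocalMin (fun t => J (u t) - ⟪p, u t⟫) t₀ :=
    Eventually.of_forall fun t => by
      have := hsub (u t)
      rw [inner_sub_right] at this
      dsimp only
      linarith
  have hderiv : HasDerivAt (fun t => J (u t) - ⟪p, u t⟫) (d - ⟪p, u'⟫) t₀ :=
    hd.sub ((hasDerivAt_const t₀ p).inner ℝ hu |>.congr_deriv (by simp))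
  linarith [hmin.hasDerivAt_eq_zero hderiv]

end Subgradient

theorem spectral_stmt9_general {H : Type*} [NormedAddCommGroup H] [InnerProductSpace ℝ H]
    (J : H → ℝ)
    (hJhom : ∀ (c : ℝ) (u : H), J (c • u) = |c| * J u)
    (u p : ℝ → H) (p' : H) (t₀ d : ℝ)
    (hu : HasDerivAt u (-(p t₀)) t₀)
    (hp' : HasDerivAt p p' t₀)
    (hsub : ∀ᶠ t in nhds t₀, ∀ v : H, J (u t) + ⟪p t, v - u t⟫ ≤ J v)
    (hd : HasDerivAt (fun t => J (u t)) d t₀) :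
    ⟪p', u t₀⟫ = 0 := by
  have heuler : ∀ᶠ t in nhds t₀, ⟪p t, u t⟫ = J (u t) :=
    hsub.mono fun t ht => inner_eq_of_subgradient_of_homogeneous
      (fun c hc => by rw [hJhom, abs_of_nonneg hc]) ht
  have hprod : HasDerivAt (fun t => ⟪p t, u t⟫) (⟪p t₀, -(p t₀)⟫ + ⟪p', u t₀⟫) t₀ :=
    hp'.inner ℝ hu
  have hd_eq_prod : ⟪p t₀, -(p t₀)⟫ + ⟪p', u t₀⟫ = d :=
    hprod.unique (hd.congr_of_eventuallyEq heuler)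
  have hd_eq_flow : d = ⟪p t₀, -(p t₀)⟫ := hu.eq_inner_of_subgradient hd hsub.self_of_nhds
  linarith

/-- Orthogonality of the spectral decomposition: along the gradient flow
`u' = -p`, `p ∈ ∂J(u)` of a convex one-homogeneous functional `J`, one has
`⟪p'(t₀), u(t₀)⟫ = 0`, i.e. `φ(t₀) = -t₀ • p'(t₀)` is orthogonal to `u(t₀)`. -/
theorem spectral_stmt9 {H : Type*} [NormedAddCommGroup H] [InnerProductSpace ℝ H]
    [CompleteSpace H] (J : H → ℝ) (hJconv : ConvexOn ℝ Set.univ J)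
    (hJhom : ∀ (c : ℝ) (u : H), J (c • u) = |c| * J u)
    (u p : ℝ → H) (p' : H) (t₀ d : ℝ)
    (hu : HasDerivAt u (-(p t₀)) t₀)
    (hp' : HasDerivAt p p' t₀)
    (hsub : ∀ᶠ t in nhds t₀, ∀ v : H, J (u t) + ⟪p t, v - u t⟫ ≤ J v)
    (hd : HasDerivAt (fun t => J (u t)) d t₀) :
    ⟪p', u t₀⟫ = 0 :=
  spectral_stmt9_general J hJhom u p p' t₀ d hu hp' hsub hd
end

section
/- Let H be a real Hilbert space and J : H → ℝ a convex, absolutely one-homogeneous functional. Let u : [0, ∞) → H be differentiable on (0, ∞) and continuous at 0 with u(0) = f, satisfying the gradient flow u'(t) = -p(t) with p(t) ∈ ∂J(u(t)) for all t > 0, and suppose ‖u(t)‖ → 0 as t → ∞ and t ↦ J(u(t)) is integrable on (0, ∞). Then ‖f‖² = 2 ∫₀^∞ J(u(t)) dt. (Nonlinear Parseval identity: with the spectral response S(t) defined via S(t)² = 2 J(u(t)) ⁻type normalization, ‖f‖² = ∫₀^∞ S(t)² dt.) -/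
open RealInnerProductSpace MeasureTheory Filter

/-! Testing the subgradient inequality at `v = 0` and `v = 2 u` shows that `⟪p, u⟫ = J u` for every
`p ∈ ∂J(u)` when `J` is absolutely one-homogeneous. Along the flow this gives
`d/dt ‖u t‖² = -2 ⟪u t, p t⟫ = -2 J (u t)`, and integrating over `(0, ∞)`, using `u t → 0`, yields
the identity. -/

theorem inner_eq_of_hasSubgradient_of_abs_homogeneous {H : Type*} [NormedAddCommGroup H]
    [InnerProductSpace ℝ H] {J : H → ℝ} (hJhom : ∀ (c : ℝ) (u : H), J (c • u) = |c| * J u)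
    {x p : H} (hsub : ∀ v : H, J x + ⟪p, v - x⟫ ≤ J v) : ⟪p, x⟫ = J x := by
  have hJ0 : J 0 = 0 := by simpa using hJhom 0 0
  have h_zero := hsub 0
  have h_two := hsub ((2 : ℝ) • x)
  rw [hJhom, two_smul, add_sub_cancel_right] at h_two
  rw [zero_sub, inner_neg_right, hJ0] at h_zero
  norm_num at h_two
  linarith

theorem spectral_stmt10_general {H : Type*} [NormedAddCommGroup H] [InnerProductSpace ℝ H]
    (J : H → ℝ)
    (hJhom : ∀ (c : ℝ) (u : H), J (c • u) = |c| * J u)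
    (f : H) (u p : ℝ → H)
    (hu0 : u 0 = f)
    (hcont : ContinuousWithinAt u (Set.Ici 0) 0)
    (hflow : ∀ t : ℝ, 0 < t → HasDerivAt u (-(p t)) t)
    (hsub : ∀ t : ℝ, 0 < t → ∀ v : H, J (u t) + ⟪p t, v - u t⟫ ≤ J v)
    (hdecay : Tendsto (fun t : ℝ => ‖u t‖) atTop (nhds 0))
    (hint : IntegrableOn (fun t : ℝ => J (u t)) (Set.Ioi 0)) :
    ‖f‖ ^ 2 = 2 * ∫ t in Set.Ioi 0, J (u t) := by
  have hderiv : ∀ t ∈ Set.Ioi (0 : ℝ),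
      HasDerivAt (‖u ·‖ ^ 2) (-2 * J (u t)) t := fun t ht => by
    have hpu := inner_eq_of_hasSubgradient_of_abs_homogeneous hJhom (hsub t ht)
    convert (hflow t ht).norm_sq using 1
    rw [inner_neg_right, real_inner_comm, hpu]
    ring
  have hlim : Tendsto (‖u ·‖ ^ 2) atTop (nhds 0) := by
    simpa using hdecay.pow 2
  have hftc := integral_Ioi_of_hasDerivAt_of_tendsto (hcont.norm.pow 2) hderiv
    (hint.const_mul (-2)) hlim
  rw [integral_const_mul, Pi.pow_apply, hu0] at hftc
  linarith

/-- Nonlinear Parseval identity: along the gradient flow of a convex absolutely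
one-homogeneous functional `J` starting at `f`, with `‖u(t)‖ → 0` and `J(u(·))`
integrable, one has `‖f‖² = 2 ∫₀^∞ J(u(t)) dt`. -/
theorem spectral_stmt10 {H : Type*} [NormedAddCommGroup H] [InnerProductSpace ℝ H]
    [CompleteSpace H] (J : H → ℝ) (hJconv : ConvexOn ℝ Set.univ J)
    (hJhom : ∀ (c : ℝ) (u : H), J (c • u) = |c| * J u)
    (f : H) (u p : ℝ → H)
    (hu0 : u 0 = f)
    (hcont : ContinuousWithinAt u (Set.Ici 0) 0)
    (hflow : ∀ t : ℝ, 0 < t → HasDerivAt u (-(p t)) t)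
    (hsub : ∀ t : ℝ, 0 < t → ∀ v : H, J (u t) + ⟪p t, v - u t⟫ ≤ J v)
    (hdecay : Tendsto (fun t : ℝ => ‖u t‖) atTop (nhds 0))
    (hint : IntegrableOn (fun t : ℝ => J (u t)) (Set.Ioi 0)) :
    ‖f‖ ^ 2 = 2 * ∫ t in Set.Ioi 0, J (u t) :=
  spectral_stmt10_general J hJhom f u p hu0 hcont hflow hsub hdecay hint
end

section
/- Let g ∈ ℝⁿ and define z : (0, ∞) → ℝⁿ by z(t)_i = sign(g_i) * max(|g_i| - t, 0). Then for every t > 0 with t ∉ {|g_1|, …, |g_n|}, z is differentiable at t with (z'(t))_i = 0 if |g_i| < t and (z'(t))_i = -sign(g_i) if |g_i| > t, and moreover -z'(t) ∈ ∂‖·‖₁(z(t)), i.e. the soft-shrinkage path satisfies the ℓ¹ gradient flow ∂ₜz ∈ -∂‖z‖₁. Hence the variational (soft-shrinkage) solution and the gradient flow solution for J(z) = ‖z‖₁ coincide. -/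
/-!
Away from the thresholds `|gᵢ|`, each coordinate of the soft-shrinkage path is locally either
the constant `0` or the affine function `sign gᵢ * (|gᵢ| - t)`, so its derivative is `0` or
`-sign gᵢ`. In both cases `-z'(t)ᵢ = sign (z(t)ᵢ)`, and the vector of signs is a subgradient
of the ℓ¹ norm because `sign x * x = |x|` and `sign x * v ≤ |v|`.
-/

open RealInnerProductSpace

theorem hasDerivAt_piLp {𝕜 ι : Type*} [NontriviallyNormedField 𝕜] [Fintype ι] {E : ι → Type*}
    [∀ i, NormedAddCommGroup (E i)] [∀ i, NormedSpace 𝕜 (E i)] {p : ENNReal} [Fact (1 ≤ p)]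
    {f : 𝕜 → PiLp p E} {f' : PiLp p E} {x : 𝕜} :
    HasDerivAt f f' x ↔ ∀ i, HasDerivAt (fun s => f s i) (f' i) x := by
  rw [← hasDerivAt_pi]
  constructor
  · exact fun h => (PiLp.hasFDerivAt_ofLp p (f x)).comp_hasDerivAt x h
  · intro h
    have h' := (PiLp.hasFDerivAt_toLp (𝕜 := 𝕜) p (f x).ofLp).comp_hasDerivAt x h
    exact h'

theorem Real.abs_add_sign_mul_sub_le (x v : ℝ) : |x| + Real.sign x * (v - x) ≤ |v| := by
  rcases lt_trichotomy x 0 with hx | rfl | hx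
  · rw [Real.sign_of_neg hx, abs_of_neg hx]
    linarith [neg_le_abs v]
  · simp [Real.sign_zero]
  · rw [Real.sign_of_pos hx, abs_of_pos hx]
    linarith [le_abs_self v]

theorem EuclideanSpace.sum_abs_add_inner_sub_le {ι : Type*} [Fintype ι]
    {x q : EuclideanSpace ℝ ι} (hq : ∀ i, q i = Real.sign (x i)) (v : EuclideanSpace ℝ ι) :
    ∑ i, |x i| + ⟪q, v - x⟫ ≤ ∑ i, |v i| := by
  rw [PiLp.inner_apply, ← Finset.sum_add_distrib]
  refine Finset.sum_le_sum fun i _ => ?_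
  simpa [hq, mul_comm] using Real.abs_add_sign_mul_sub_le (x i) (v i)

noncomputable def softShrink (t a : ℝ) : ℝ := Real.sign a * max (|a| - t) 0

theorem hasDerivAt_max_sub_zero {c t : ℝ} (h : t ≠ c) :
    HasDerivAt (fun s => max (c - s) 0) (if c < t then 0 else -1) t := by
  rcases h.lt_or_gt with h | h
  · rw [if_neg h.not_gt]
    refine ((hasDerivAt_id t).const_sub c).congr_of_eventuallyEq ?_
    filter_upwards [eventually_lt_nhds h] with s hs
    exact max_eq_left (by linarith)
  · rw [if_pos h]
    refine (hasDerivAt_const t (0 : ℝ)).congr_of_eventuallyEq ?_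
    filter_upwards [eventually_gt_nhds h] with s hs
    exact max_eq_right (by linarith)

theorem hasDerivAt_softShrink {a t : ℝ} (h : t ≠ |a|) :
    HasDerivAt (fun s => softShrink s a) (if |a| < t then 0 else -Real.sign a) t := by
  unfold softShrink
  simpa [apply_ite (Real.sign a * ·)] using (hasDerivAt_max_sub_zero h).const_mul (Real.sign a)

theorem neg_deriv_softShrink_eq_sign {a t : ℝ} (h : t ≠ |a|) :
    -(if |a| < t then 0 else -Real.sign a) = Real.sign (softShrink t a) := by
  rcases h.lt_or_gt with h | h
  · rw [if_neg h.not_gt, neg_neg, softShrink, max_eq_left (by linarith)]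
    rcases lt_trichotomy a 0 with ha | rfl | ha
    · rw [Real.sign_of_neg ha, Real.sign_of_neg (by linarith)]
    · simp [Real.sign_zero]
    · rw [Real.sign_of_pos ha, Real.sign_of_pos (by linarith)]
  · rw [if_pos h, softShrink, max_eq_right (by linarith), mul_zero, Real.sign_zero, neg_zero]

theorem spectral_stmt15_general (n : ℕ) (g : EuclideanSpace ℝ (Fin n))
    (z : ℝ → EuclideanSpace ℝ (Fin n))
    (hz : ∀ t : ℝ, ∀ i, z t i = Real.sign (g i) * max (|g i| - t) 0)
    (t : ℝ) (htg : ∀ i, t ≠ |g i|)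
    (z' : EuclideanSpace ℝ (Fin n))
    (hz' : ∀ i, z' i = if |g i| < t then 0 else -Real.sign (g i)) :
    HasDerivAt z z' t ∧
    (∀ v : EuclideanSpace ℝ (Fin n), (∑ i, |z t i|) + ⟪-z', v - z t⟫ ≤ ∑ i, |v i|) := by
  have hz_coord : ∀ i, (fun s => z s i) = fun s => softShrink s (g i) :=
    fun i => funext fun s => hz s i
  refine ⟨hasDerivAt_piLp.2 fun i => ?_, EuclideanSpace.sum_abs_add_inner_sub_le fun i => ?_⟩
  · rw [hz_coord, hz']
    exact hasDerivAt_softShrink (htg i)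
  · rw [PiLp.neg_apply, hz', hz]
    exact neg_deriv_softShrink_eq_sign (htg i)

/-- The soft-shrinkage path `z(t)_i = sign(g_i) * max(|g_i| - t, 0)` satisfies the ℓ¹
gradient flow: for `t > 0` away from the values `|g_i|`, `z` is differentiable at `t`
with `(z'(t))_i = 0` if `|g_i| < t` and `-sign(g_i)` otherwise, and
`-z'(t) ∈ ∂‖·‖₁(z(t))`. Hence the variational (soft-shrinkage) solution and the
gradient flow solution for `J = ‖·‖₁` coincide. -/
theorem spectral_stmt15 (n : ℕ) (g : EuclideanSpace ℝ (Fin n))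
    (z : ℝ → EuclideanSpace ℝ (Fin n))
    (hz : ∀ t : ℝ, ∀ i, z t i = Real.sign (g i) * max (|g i| - t) 0)
    (t : ℝ) (ht : 0 < t) (htg : ∀ i, t ≠ |g i|)
    (z' : EuclideanSpace ℝ (Fin n))
    (hz' : ∀ i, z' i = if |g i| < t then 0 else -Real.sign (g i)) :
    HasDerivAt z z' t ∧
    (∀ v : EuclideanSpace ℝ (Fin n), (∑ i, |z t i|) + ⟪-z', v - z t⟫ ≤ ∑ i, |v i|) :=
  spectral_stmt15_general n g z hz t htg z' hz'
end

section
/- Let H be a real Hilbert space, J : H → ℝ a convex, absolutely one-homogeneous functional, and f ∈ H an eigenfunction, i.e. λ • f ∈ ∂J(f) for some λ > 0. Let u(t) = max(1 - λ*t, 0) • f be the gradient flow solution. Then for 0 ≤ t < 1/λ one has J(u(t)) = λ * (1 - λ*t) * ‖f‖², and for t ≥ 1/λ one has J(u(t)) = 0; in particular ∫₀^∞ J(u(t)) dt = ‖f‖²/2, confirming the Parseval identity for eigenfunctions. -/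
open RealInnerProductSpace MeasureTheory

/-! Testing the subgradient inequality at `v = 0` and `v = 2 • f` shows that an absolutely
one-homogeneous `J` satisfies `J f = ⟪p, f⟫` for every subgradient `p` at `f`; for an eigenfunction
this gives `J f = λ ‖f‖²`. Homogeneity then turns `J (u t)` into `max (1 - λ t) 0 * λ ‖f‖²`,
a tent function whose integral over `(0, ∞)` is `1 / (2λ) * λ ‖f‖² = ‖f‖² / 2`. -/

theorem apply_eq_inner_of_subgradient {H : Type*} [NormedAddCommGroup H] [InnerProductSpace ℝ H]
    {J : H → ℝ} (hJ : ∀ (c : ℝ) (u : H), J (c • u) = |c| * J u) {f p : H}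
    (hp : ∀ v : H, J f + ⟪p, v - f⟫ ≤ J v) : J f = ⟪p, f⟫ := by
  have hJ0 : J 0 = 0 := by simpa using hJ 0 0
  have hJ2 : J ((2 : ℝ) • f) = 2 * J f := by simpa using hJ 2 f
  have h0 := hp 0
  have h2 := hp ((2 : ℝ) • f)
  rw [hJ0, zero_sub, inner_neg_right] at h0
  rw [hJ2, two_smul, add_sub_cancel_right] at h2
  linarith

theorem integral_Ioi_max_one_sub_mul {a : ℝ} (ha : 0 < a) :
    ∫ t in Set.Ioi (0 : ℝ), max (1 - a * t) 0 = 1 / (2 * a) := by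
  have hvanish : ∀ t ∈ Set.Ioi (0 : ℝ) \ Set.Ioc 0 (1 / a), max (1 - a * t) 0 = 0 := by
    rintro t ⟨ht0, ht⟩
    have : 1 / a < t := by simpa [Set.mem_Ioi.mp ht0] using ht
    rw [div_lt_iff₀ ha] at this
    exact max_eq_right (by linarith)
  have hlinear : ∀ t ∈ Set.uIcc 0 (1 / a), max (1 - a * t) 0 = 1 - a * t := by
    intro t ht
    rw [Set.uIcc_of_le (by positivity)] at ht
    have : t * a ≤ 1 := (le_div_iff₀ ha).mp ht.2
    exact max_eq_left (by linarith)
  rw [setIntegral_eq_of_subset_of_forall_sdiff_eq_zero measurableSet_Ioi Set.Ioc_subset_Ioi_self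
    hvanish, ← intervalIntegral.integral_of_le (by positivity),
    intervalIntegral.integral_congr hlinear, intervalIntegral.integral_sub intervalIntegrable_const
    (intervalIntegral.intervalIntegrable_id.const_mul a), intervalIntegral.integral_const_mul,
    integral_id, intervalIntegral.integral_const]
  simp only [sub_zero, smul_eq_mul, mul_one]
  field_simp
  ring

theorem spectral_stmt17_general {H : Type*} [NormedAddCommGroup H] [InnerProductSpace ℝ H]
    (J : H → ℝ)
    (hJhom : ∀ (c : ℝ) (u : H), J (c • u) = |c| * J u)
    (f : H) (lam : ℝ) (hlam : 0 < lam)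
    (heig : ∀ v : H, J f + ⟪lam • f, v - f⟫ ≤ J v)
    (u : ℝ → H) (hu : ∀ t : ℝ, u t = max (1 - lam * t) 0 • f) :
    (∀ t : ℝ, 0 ≤ t → t < 1 / lam → J (u t) = lam * (1 - lam * t) * ‖f‖ ^ 2) ∧
    (∀ t : ℝ, 1 / lam ≤ t → J (u t) = 0) ∧
    (∫ t in Set.Ioi (0 : ℝ), J (u t)) = ‖f‖ ^ 2 / 2 := by
  have hJf : J f = lam * ‖f‖ ^ 2 := by
    rw [apply_eq_inner_of_subgradient hJhom heig, real_inner_smul_left, real_inner_self_eq_norm_sq]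
  have hJu : ∀ t, J (u t) = max (1 - lam * t) 0 * (lam * ‖f‖ ^ 2) := fun t => by
    rw [hu, hJhom, abs_of_nonneg (le_max_right _ _), hJf]
  refine ⟨fun t _ ht => ?_, fun t ht => ?_, ?_⟩
  · have : t * lam < 1 := (lt_div_iff₀ hlam).mp ht
    rw [hJu, max_eq_left (by linarith)]
    ring
  · have : 1 ≤ t * lam := (div_le_iff₀ hlam).mp ht
    rw [hJu, max_eq_right (by linarith), zero_mul]
  · simp_rw [hJu]
    rw [integral_mul_const, integral_Ioi_max_one_sub_mul hlam]
    field_simp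

/-- For an eigenfunction `f` of `J` with `λ • f ∈ ∂J(f)`, `λ > 0`, and the gradient flow
solution `u(t) = max(1 - λt, 0) • f`, one has `J(u(t)) = λ(1 - λt)‖f‖²` for
`0 ≤ t < 1/λ` and `J(u(t)) = 0` for `t ≥ 1/λ`; in particular
`∫₀^∞ J(u(t)) dt = ‖f‖²/2` (Parseval identity for eigenfunctions). -/
theorem spectral_stmt17 {H : Type*} [NormedAddCommGroup H] [InnerProductSpace ℝ H]
    [CompleteSpace H] (J : H → ℝ) (hJconv : ConvexOn ℝ Set.univ J)
    (hJhom : ∀ (c : ℝ) (u : H), J (c • u) = |c| * J u)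
    (f : H) (lam : ℝ) (hlam : 0 < lam)
    (heig : ∀ v : H, J f + ⟪lam • f, v - f⟫ ≤ J v)
    (u : ℝ → H) (hu : ∀ t : ℝ, u t = max (1 - lam * t) 0 • f) :
    (∀ t : ℝ, 0 ≤ t → t < 1 / lam → J (u t) = lam * (1 - lam * t) * ‖f‖ ^ 2) ∧
    (∀ t : ℝ, 1 / lam ≤ t → J (u t) = 0) ∧
    (∫ t in Set.Ioi (0 : ℝ), J (u t)) = ‖f‖ ^ 2 / 2 :=
  spectral_stmt17_general J hJhom f lam hlam heig u hu
end
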